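/- arXiv:1112.3848 — 6 statements merged into one kernel-verified Lean document; each statement's English description precedes it below -/
import Mathlib

section
/- For all natural numbers N, j, h with j ≤ N, the alternating sum ∑_{l=0}^{j} (-1)^l * C(N, j-l) * C(N+h-l, h+1-l) equals C(N+h+1, j) * C(N+h-j, h+1). -/
open Finset

private lemma vand (n : ℕ) : ∀ K r : ℕ, r < n →
    ∑ m ∈ range (n + 1), (-1 : ℤ) ^ m * (n.choose m) * ((K + m).choose r) = 0 := by
  induction n with
  | zero => exact fun K r hr => absurd hr (Nat.not_lt_zero r)
  | succ n ih =>
    intro K r hr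
    have pe : ∀ i ∈ range (n+1), (-1:ℤ)^(i+1) * ((n+1).choose (i+1)) * ((K + (i+1)).choose r)
        = -((-1:ℤ)^i * (n.choose i) * ((K+1+i).choose r))
          + -((-1:ℤ)^i * (n.choose (i+1)) * ((K+1+i).choose r)) := by
      intro i _
      rw [Nat.choose_succ_succ, show K + (i+1) = K + 1 + i from by omega]
      push_cast
      ring
    have e2 : (∑ i ∈ range (n+1), (-1:ℤ)^i * (n.choose (i+1)) * ((K+1+i).choose r))
        = (K.choose r : ℤ) - ∑ m ∈ range (n+1), (-1:ℤ)^m * (n.choose m) * ((K+m).choose r) := by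
      have h4 : ∑ m ∈ range (n+1+1), (-1:ℤ)^m * (n.choose m) * ((K+m).choose r)
          = ∑ m ∈ range (n+1), (-1:ℤ)^m * (n.choose m) * ((K+m).choose r) := by
        rw [Finset.sum_range_succ, Nat.choose_succ_self]
        simp
      have h5 : ∑ m ∈ range (n+1+1), (-1:ℤ)^m * (n.choose m) * ((K+m).choose r)
          = (∑ i ∈ range (n+1), (-1:ℤ)^(i+1) * (n.choose (i+1)) * ((K+(i+1)).choose r))
            + (K.choose r : ℤ) := by
        rw [Finset.sum_range_succ']
        simp
      have h6 : ∀ i ∈ range (n+1), (-1:ℤ)^(i+1) * (n.choose (i+1)) * ((K+(i+1)).choose r)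
          = -((-1:ℤ)^i * (n.choose (i+1)) * ((K+1+i).choose r)) := by
        intro i _
        rw [show K+(i+1) = K+1+i from by omega, pow_succ]
        ring
      rw [Finset.sum_congr rfl h6, Finset.sum_neg_distrib] at h5
      linarith [h4.symm.trans h5]
    have e3 : ∑ m ∈ range (n+1+1), (-1:ℤ)^m * ((n+1).choose m) * ((K+m).choose r)
        = ∑ i ∈ range (n+1), (-1:ℤ)^i * (n.choose i) * (((K+i).choose r : ℤ) - ((K+1+i).choose r)) := by
      rw [Finset.sum_range_succ', Finset.sum_congr rfl pe, Finset.sum_add_distrib,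
        Finset.sum_neg_distrib, Finset.sum_neg_distrib, e2,
        Finset.sum_congr rfl (fun i _ => (mul_sub ((-1:ℤ)^i * (n.choose i)) _ _)),
        Finset.sum_sub_distrib]
      simp only [pow_zero, Nat.choose_zero_right, Nat.cast_one, add_zero, one_mul, mul_one]
      ring
    rw [e3]
    rcases r with _ | s
    · simp
    · have e4 : ∀ i ∈ range (n+1), (-1:ℤ)^i * (n.choose i) * (((K+i).choose (s+1) : ℤ) - ((K+1+i).choose (s+1)))
          = -((-1:ℤ)^i * (n.choose i) * ((K+i).choose s)) := by
        intro i _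
        rw [show K+1+i = (K+i)+1 from by omega, Nat.choose_succ_succ]
        push_cast
        ring
      rw [Finset.sum_congr rfl e4, Finset.sum_neg_distrib, ih K s (by omega), neg_zero]

private lemma starQ (j f h : ℕ) :
    ((j+f+2).choose (j+1) : ℚ) * ((j+f+h+3).choose (j+f+1)) =
      ((j+f+h+3).choose j) * ((f+h+2).choose (h+1)) +
      ((j+f+h+4).choose (j+1)) * ((f+h+2).choose (h+2)) := by
  rw [Nat.cast_choose ℚ (show j+1 ≤ j+f+2 by omega),
      Nat.cast_choose ℚ (show j+f+1 ≤ j+f+h+3 by omega),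
      Nat.cast_choose ℚ (show j ≤ j+f+h+3 by omega),
      Nat.cast_choose ℚ (show h+1 ≤ f+h+2 by omega),
      Nat.cast_choose ℚ (show j+1 ≤ j+f+h+4 by omega),
      Nat.cast_choose ℚ (show h+2 ≤ f+h+2 by omega)]
  rw [show j+f+2 - (j+1) = f+1 from by omega, show j+f+h+3 - (j+f+1) = h+2 from by omega,
      show j+f+h+3 - j = f+h+3 from by omega, show f+h+2 - (h+1) = f+1 from by omega,
      show j+f+h+4 - (j+1) = f+h+3 from by omega, show f+h+2 - (h+2) = f from by omega]
  rw [show j+f+h+4 = (j+f+h+3)+1 from by omega, show f+h+3 = (f+h+2)+1 from by omega,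
      show j+f+2 = (j+f+1)+1 from by omega, show h+2 = (h+1)+1 from by omega]
  simp only [Nat.factorial_succ]
  push_cast
  have n1 : ((j:ℚ)+f+h+3) ≠ 0 := by positivity
  have n2 : ((f:ℚ)+h+2) ≠ 0 := by positivity
  have nf : ∀ m : ℕ, ((m.factorial : ℚ)) ≠ 0 := fun m => by
    exact_mod_cast Nat.cast_ne_zero.mpr m.factorial_ne_zero
  field_simp
  ring

private lemma starN (j e h : ℕ) :
    ((j+e+1).choose (j+1)) * ((j+e+h+2).choose (j+e)) =
      ((j+e+h+2).choose j) * ((e+h+1).choose (h+1)) +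
      ((j+e+h+3).choose (j+1)) * ((e+h+1).choose (h+2)) := by
  cases e with
  | zero =>
    simp [Nat.choose_eq_zero_of_lt (show h+1 < h+2 by omega), Nat.choose_self]
  | succ f =>
    rw [show j+(f+1)+1 = j+f+2 from by omega, show j+(f+1)+h+2 = j+f+h+3 from by omega,
        show j+(f+1) = j+f+1 from by omega, show (f+1)+h+1 = f+h+2 from by omega,
        show j+f+1+h+3 = j+f+h+4 from by omega]
    exact_mod_cast starQ j f h

private lemma key (d j h : ℕ) :
    ∑ t ∈ Finset.range d, (-1:ℤ)^t * ((j+d).choose (j+1+t)) * ((j+d+h+1+t).choose (j+d-1)) =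
      ((j+d+h+1).choose j) * ((d+h).choose (h+1)) := by
  induction d generalizing j h with
  | zero => simp [Nat.choose_succ_self]
  | succ e ih =>
    rw [Finset.sum_range_succ']
    have ht : ∀ i ∈ range e,
        (-1:ℤ)^(i+1) * ((j+(e+1)).choose (j+1+(i+1))) * ((j+(e+1)+h+1+(i+1)).choose (j+(e+1)-1))
        = -((-1:ℤ)^i * ((j+1+e).choose (j+1+1+i)) * ((j+1+e+(h+1)+1+i).choose (j+1+e-1))) := by
      intro i _
      rw [show j+1+(i+1) = j+1+1+i from by omega,
          show j+(e+1)+h+1+(i+1) = j+1+e+(h+1)+1+i from by omega,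
          show j+(e+1) = j+1+e from by omega, pow_succ]
      ring
    rw [Finset.sum_congr rfl ht, Finset.sum_neg_distrib, ih (j+1) (h+1)]
    rw [show j+1+e+(h+1)+1 = j+e+h+3 from by omega, show e+(h+1) = e+h+1 from by omega,
        show h+1+1 = h+2 from by omega, show j+1+0 = j+1 from by omega,
        show j+(e+1)+h+1+0 = j+e+h+2 from by omega,        show j+(e+1)-1 = j+e from by omega, show j+(e+1) = j+e+1 from by omega,
        show (e+1)+h = e+h+1 from by omega]
    have hs : ((j+e+1).choose (j+1) * ((j+e+h+2).choose (j+e)) : ℤ)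
        = ((j+e+h+2).choose j) * ((e+h+1).choose (h+1))
          + ((j+e+h+3).choose (j+1)) * ((e+h+1).choose (h+2)) := by
      exact_mod_cast starN j e h
    simp only [pow_zero, one_mul]
    linarith [hs]


/-- Lemma: for naturals `N, j, h` with `j ≤ N`,
`∑_{l=0}^{j} (-1)^l C(N, j-l) C(N+h-l, h+1-l) = C(N+h+1, j) C(N+h-j, h+1)`,
with the convention that `C(n, k) = 0` when `k < 0` (encoded by the `if l ≤ h+1` guard,
since for `l > h+1` the second binomial has a negative lower index). -/
theorem alternating_binomial_sum (N j h : ℕ) (hj : j ≤ N) :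
    ∑ l ∈ Finset.range (j + 1),
      (-1 : ℤ) ^ l * (N.choose (j - l)) *
        (if l ≤ h + 1 then ((N + h - l).choose (h + 1 - l) : ℤ) else 0) =
    ((N + h + 1).choose j : ℤ) * ((N + h - j).choose (h + 1)) := by
  rcases Nat.eq_zero_or_pos N with rfl | hN
  · obtain rfl : j = 0 := by omega
    simp [Nat.choose_succ_self]
  · -- Step 1: reflect the sum
    have step1 : ∑ l ∈ Finset.range (j + 1),
        (-1 : ℤ) ^ l * (N.choose (j - l)) *
          (if l ≤ h + 1 then ((N + h - l).choose (h + 1 - l) : ℤ) else 0)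
        = (-1:ℤ)^j * ∑ m ∈ range (j+1),
            (-1:ℤ)^m * (N.choose m) * ((N+h-j+m).choose (N-1)) := by
      rw [← Finset.sum_range_reflect, Finset.mul_sum]
      refine Finset.sum_congr rfl fun m hm => ?_
      have hm' : m ≤ j := by simpa using Nat.lt_succ_iff.mp (Finset.mem_range.mp hm)
      simp only [Nat.add_sub_cancel]
      have hsub : j - (j - m) = m := by omega
      have hsign : ((-1:ℤ)^(j-m)) = (-1)^j * (-1)^m := by
        have h1 : (-1:ℤ)^j = (-1)^(j-m) * (-1)^m := by
          rw [← pow_add, show j - m + m = j from by omega]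
        have h2 : (-1:ℤ)^m * (-1)^m = 1 := by
          rw [← pow_add]; exact Even.neg_one_pow ⟨m, rfl⟩
        calc (-1:ℤ)^(j-m) = (-1)^(j-m) * ((-1)^m * (-1)^m) := by rw [h2, mul_one]
          _ = (-1)^j * (-1)^m := by rw [h1]; ring
      have hif : (if j-m ≤ h+1 then (((N+h-(j-m)).choose (h+1-(j-m))):ℤ) else 0)
          = ((N+h-j+m).choose (N-1) : ℤ) := by
        split_ifs with hle
        · have h1 : N+h-(j-m) = N+h-j+m := by omega
          have h3 : (N+h-j+m) - (h+1-(j-m)) = N - 1 := by omega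
          rw [h1, ← h3, Nat.choose_symm (by omega)]
        · rw [Nat.choose_eq_zero_of_lt (show N+h-j+m < N-1 by omega)]
          simp
      rw [hsub, hsign, hif]
      ring
    rw [step1]
    -- Step 2: Vandermonde zero + split
    have hv := vand N (N+h-j) (N-1) (by omega)
    rw [show N+1 = (j+1)+(N-j) from by omega, Finset.sum_range_add] at hv
    -- Step 3: tail transformation
    have htail : ∀ t ∈ range (N-j),
        (-1:ℤ)^(j+1+t) * (N.choose (j+1+t)) * ((N+h-j+(j+1+t)).choose (N-1))
        = -((-1:ℤ)^j * ((-1:ℤ)^t * (N.choose (j+1+t)) * ((N+h+1+t).choose (N-1)))) := by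
      intro t _
      rw [show N+h-j+(j+1+t) = N+h+1+t from by omega, pow_add, pow_add, pow_one]
      ring
    rw [Finset.sum_congr rfl htail, Finset.sum_neg_distrib] at hv
    have hkey := key (N-j) j h
    rw [show j+(N-j) = N from by omega] at hkey
    rw [show N-j+h = N+h-j from by omega] at hkey
    have hsq : (-1:ℤ)^j * (-1)^j = 1 := by
      rw [← pow_add]; exact Even.neg_one_pow ⟨j, rfl⟩
    -- from hv : S1 + -( (-1)^j * keysum ) = 0
    rw [← hkey]
    rw [← Finset.mul_sum] at hv
    have hS : ∑ m ∈ range (j+1), (-1:ℤ)^m * (N.choose m) * ((N+h-j+m).choose (N-1))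
        = (-1:ℤ)^j * ∑ t ∈ range (N-j), (-1:ℤ)^t * (N.choose (j+1+t)) * ((N+h+1+t).choose (N-1)) := by
      linarith [hv]
    rw [hS, ← mul_assoc, hsq, one_mul]
end

section
/- The function F(N, j, h) := ∑_{l=0}^{j} (-1)^l * C(N, j-l) * C(N+h-l, h+1-l) satisfies the recurrence F(N, j, h) = F(N-1, j, h) + F(N-1, j-1, h) + F(N, j, h-1) for N ≥ 1, j ≥ 1, h ≥ 1. -/
/-- `F(N, j, h) = ∑_{l=0}^{j} (-1)^l C(N, j-l) C(N+h-l, h+1-l)`, with the convention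
`C(n, k) = 0` for `k < 0` (the `if l ≤ h+1` guard). -/
def altBinomSum (N j h : ℕ) : ℤ :=
  ∑ l ∈ Finset.range (j + 1),
    (-1 : ℤ) ^ l * (N.choose (j - l)) *
      (if l ≤ h + 1 then ((N + h - l).choose (h + 1 - l) : ℤ) else 0)

/-- Pascal-type identity for the guarded second binomial factor. -/
lemma guard_pascal (N h l : ℕ) (hN : 1 ≤ N) (hh : 1 ≤ h) :
    (if l ≤ h + 1 then ((N + h - l).choose (h + 1 - l) : ℤ) else 0)
      = (if l ≤ h + 1 then ((N - 1 + h - l).choose (h + 1 - l) : ℤ) else 0)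
        + (if l ≤ h - 1 + 1 then ((N + (h - 1) - l).choose (h - 1 + 1 - l) : ℤ) else 0) := by
  rcases lt_trichotomy l (h + 1) with hl | hl | hl
  · have h1 : l ≤ h + 1 := by omega
    have h2 : l ≤ h - 1 + 1 := by omega
    rw [if_pos h1, if_pos h1, if_pos h2]
    have e1 : N + h - l = (N - 1 + h - l) + 1 := by omega
    have e2 : h + 1 - l = (h - l) + 1 := by omega
    have e3 : N + (h - 1) - l = N - 1 + h - l := by omega
    have e4 : h - 1 + 1 - l = h - l := by omega
    rw [e1, e2, e3, e4, Nat.choose_succ_succ]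
    push_cast
    ring
  · have h1 : l ≤ h + 1 := by omega
    have h2 : ¬ (l ≤ h - 1 + 1) := by omega
    rw [if_pos h1, if_pos h1, if_neg h2]
    have e2 : h + 1 - l = 0 := by omega
    rw [e2]
    simp
  · have h1 : ¬ (l ≤ h + 1) := by omega
    have h2 : ¬ (l ≤ h - 1 + 1) := by omega
    rw [if_neg h1, if_neg h1, if_neg h2]
    ring

/-- Pascal for the first binomial factor. -/
lemma first_pascal (N j l : ℕ) (hN : 1 ≤ N) (hl : l < j) :
    (N.choose (j - l) : ℤ) = (N - 1).choose (j - l) + (N - 1).choose (j - 1 - l) := by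
  have e1 : N = (N - 1) + 1 := by omega
  have e2 : j - l = (j - 1 - l) + 1 := by omega
  rw [e1, e2, Nat.choose_succ_succ]
  push_cast
  ring

/-- The recurrence `F(N, j, h) = F(N-1, j, h) + F(N-1, j-1, h) + F(N, j, h-1)`
for `N ≥ 1`, `j ≥ 1`, `h ≥ 1`. -/
theorem altBinomSum_recurrence (N j h : ℕ) (hN : 1 ≤ N) (hj : 1 ≤ j) (hh : 1 ≤ h) :
    altBinomSum N j h =
      altBinomSum (N - 1) j h + altBinomSum (N - 1) (j - 1) h + altBinomSum N j (h - 1) := by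
  unfold altBinomSum
  have hrange : j - 1 + 1 = j := by omega
  rw [hrange]
  have key : ∀ l ∈ Finset.range (j + 1),
      (-1 : ℤ) ^ l * (N.choose (j - l)) *
          (if l ≤ h + 1 then ((N + h - l).choose (h + 1 - l) : ℤ) else 0)
        = (-1 : ℤ) ^ l * ((N - 1).choose (j - l)) *
            (if l ≤ h + 1 then (((N - 1) + h - l).choose (h + 1 - l) : ℤ) else 0)
          + (if l < j then (-1 : ℤ) ^ l * ((N - 1).choose (j - 1 - l)) *
              (if l ≤ h + 1 then (((N - 1) + h - l).choose (h + 1 - l) : ℤ) else 0) else 0)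
          + (-1 : ℤ) ^ l * (N.choose (j - l)) *
            (if l ≤ h - 1 + 1 then ((N + (h - 1) - l).choose (h - 1 + 1 - l) : ℤ) else 0) := by
    intro l hl
    rw [guard_pascal N h l hN hh]
    by_cases hlj : l < j
    · rw [if_pos hlj, first_pascal N j l hN hlj]
      ring
    · have hlj' : l = j := by
        simp only [Finset.mem_range] at hl; omega
      rw [if_neg hlj]
      have e0 : j - l = 0 := by omega
      rw [e0]
      simp only [Nat.choose_zero_right, Nat.cast_one]
      ring
  rw [Finset.sum_congr rfl key, Finset.sum_add_distrib, Finset.sum_add_distrib,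
    Finset.sum_range_succ (fun l => if l < j then (-1 : ℤ) ^ l * ((N - 1).choose (j - 1 - l)) *
      (if l ≤ h + 1 then (((N - 1) + h - l).choose (h + 1 - l) : ℤ) else 0) else 0) j]
  simp only [lt_irrefl, if_false, add_zero]
  congr 1
  congr 1
  apply Finset.sum_congr rfl
  intro l hl
  rw [if_pos (Finset.mem_range.mp hl)]
end

section
/- For the formal power series a(z) = (1-tz)^{-N_f} (1-t/z)^{-N_f} regarded over ℚ[[t]], the odd logarithmic Fourier coefficients satisfy [log a]_{2n+1} = N_f t^{2n+1}/(2n+1) and the general coefficients satisfy [log a]_n = N_f t^n / n for n ≥ 1, so that exp(-∑_{n≥0} [log a]_{2n+1} + (1/2)∑_{n≥1} n [log a]_n²) = (1-t)^{N_f} (1-t²)^{-N_f(N_f+1)/2} as formal power series in t. -/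
/-!
Both series are logarithms: the odd-power series is `artanh t = (log (1 + t) - log (1 - t)) / 2`
and `∑ (n + 1) (N tⁿ⁺¹ / (n + 1))² = N² ∑ (t²)ⁿ⁺¹ / (n + 1) = -N² log (1 - t²)`. Since
`log (1 - t²) = log (1 - t) + log (1 + t)`, the exponent collapses to
`N log (1 - t) - N (N + 1) / 2 · log (1 - t²)`, which is the logarithm of the right-hand side.
-/

namespace Real

variable {t : ℝ}

theorem hasSum_odd_pow_div (ht : |t| < 1) :
    HasSum (fun n : ℕ => t ^ (2 * n + 1) / (2 * n + 1)) ((log (1 + t) - log (1 - t)) / 2) := by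
  refine (hasSum_log_sub_log_of_abs_lt_one ht).div_const 2 |>.congr_fun fun n => ?_
  ring

theorem hasSum_succ_mul_sq_pow_div (c : ℝ) (ht : |t| < 1) :
    HasSum (fun n : ℕ => ((n + 1 : ℕ) : ℝ) * (c * t ^ (n + 1) / (n + 1)) ^ 2)
      (-(c ^ 2 * log (1 - t ^ 2))) := by
  have ht2 : |t ^ 2| < 1 := by rwa [abs_pow, sq_lt_one_iff_abs_lt_one, abs_abs]
  rw [← mul_neg]
  refine (hasSum_pow_div_log_of_abs_lt_one ht2).mul_left (c ^ 2) |>.congr_fun fun n => ?_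
  have hn : (n : ℝ) + 1 ≠ 0 := by positivity
  push_cast
  field_simp
  ring

theorem log_one_sub_sq (ht : |t| < 1) : log (1 - t ^ 2) = log (1 - t) + log (1 + t) := by
  obtain ⟨hlo, hhi⟩ := abs_lt.mp ht
  rw [show (1 : ℝ) - t ^ 2 = (1 - t) * (1 + t) by ring, log_mul (by linarith) (by linarith)]

end Real

theorem Nat.cast_mul_succ_div_two {K : Type*} [DivisionSemiring K] [NeZero (2 : K)] (n : ℕ) :
    ((n * (n + 1) / 2 : ℕ) : K) = n * (n + 1) / 2 := by
  rw [Nat.cast_div (even_iff_two_dvd.mp (Nat.even_mul_succ_self n)) (by exact_mod_cast two_ne_zero)]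
  push_cast
  rfl

/-- For the symbol `a(z) = (1-tz)^{-N_f}(1-t/z)^{-N_f}` one has
`[log a]_n = N_f t^n / n` for `n ≥ 1` (in particular `[log a]_{2n+1} = N_f t^{2n+1}/(2n+1)`),
so that
`exp(-∑_{n≥0} [log a]_{2n+1} + (1/2) ∑_{n≥1} n [log a]_n²)
  = (1-t)^{N_f} (1-t²)^{-N_f(N_f+1)/2}`,
stated here as a convergent identity for `|t| < 1`. -/
theorem F_II_formula (Nf : ℕ) (t : ℝ) (ht : |t| < 1) :
    Real.exp (-(∑' n : ℕ, (Nf : ℝ) * t ^ (2 * n + 1) / (2 * n + 1)) +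
        (1 / 2) * ∑' n : ℕ, ((n + 1 : ℕ) : ℝ) *
          ((Nf : ℝ) * t ^ (n + 1) / (n + 1)) ^ 2) =
    (1 - t) ^ Nf / (1 - t ^ 2) ^ (Nf * (Nf + 1) / 2) := by
  obtain ⟨hlo, hhi⟩ := abs_lt.mp ht
  have h_odd := (Real.hasSum_odd_pow_div ht).mul_left (Nf : ℝ)
  simp only [← mul_div_assoc] at h_odd
  have h_lin : 0 < 1 - t := by linarith
  have h_sq : 0 < 1 - t ^ 2 := by nlinarith
  rw [h_odd.tsum_eq, (Real.hasSum_succ_mul_sq_pow_div (Nf : ℝ) ht).tsum_eq,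
    ← Real.exp_log (div_pos (pow_pos h_lin _) (pow_pos h_sq _)),
    Real.log_div (pow_pos h_lin _).ne' (pow_pos h_sq _).ne', Real.log_pow, Real.log_pow,
    Nat.cast_mul_succ_div_two, Real.log_one_sub_sq ht]
  congr 1
  ring
end

section
/- For the same symbol a(z) = (1-tz)^{-N_f}(1-t/z)^{-N_f}, one has exp(∑_{n≥1} [log a]_{2n} + (1/2)∑_{n≥1} n [log a]_n²) = (1-t²)^{-N_f(N_f+1)/2} as formal power series in t. -/
/-- For the symbol `a(z) = (1-tz)^{-N_f}(1-t/z)^{-N_f}`, with `[log a]_n = N_f t^n / n`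
for `n ≥ 1`, one has
`exp(∑_{n≥1} [log a]_{2n} + (1/2) ∑_{n≥1} n [log a]_n²) = (1-t²)^{-N_f(N_f+1)/2}`,
stated here as a convergent identity for `|t| < 1`. -/
theorem F_IV_formula (Nf : ℕ) (t : ℝ) (ht : |t| < 1) :
    Real.exp ((∑' n : ℕ, (Nf : ℝ) * t ^ (2 * (n + 1)) / (2 * (n + 1))) +
        (1 / 2) * ∑' n : ℕ, ((n + 1 : ℕ) : ℝ) *
          ((Nf : ℝ) * t ^ (n + 1) / (n + 1)) ^ 2) =
    1 / (1 - t ^ 2) ^ (Nf * (Nf + 1) / 2) := by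
  have hx : |t ^ 2| < 1 := by
    rw [abs_pow]
    calc |t| ^ 2 ≤ |t| := by nlinarith [abs_nonneg t]
    _ < 1 := ht
  have hs := Real.hasSum_pow_div_log_of_abs_lt_one hx
  set L := Real.log (1 - t ^ 2) with hL
  have hpos : (0 : ℝ) < 1 - t ^ 2 := by
    have := abs_lt.mp hx
    linarith [this.2, le_abs_self (t ^ 2)]
  have h1 : HasSum (fun n : ℕ => (Nf : ℝ) * t ^ (2 * (n + 1)) / (2 * (n + 1)))
      ((Nf : ℝ) / 2 * (-L)) := by
    have := hs.mul_left ((Nf : ℝ) / 2)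
    refine this.congr_fun fun n => ?_
    have hn : ((n : ℝ) + 1) ≠ 0 := by positivity
    rw [pow_mul]
    push_cast
    field_simp
  have h2 : HasSum (fun n : ℕ => ((n + 1 : ℕ) : ℝ) * ((Nf : ℝ) * t ^ (n + 1) / (n + 1)) ^ 2)
      ((Nf : ℝ) ^ 2 * (-L)) := by
    have := hs.mul_left ((Nf : ℝ) ^ 2)
    refine this.congr_fun fun n => ?_
    have hn : ((n : ℝ) + 1) ≠ 0 := by positivity
    rw [← pow_mul]
    push_cast
    field_simp
    ring
  rw [h1.tsum_eq, h2.tsum_eq]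
  set k : ℕ := Nf * (Nf + 1) / 2 with hk
  have h2k : 2 * k = Nf * (Nf + 1) := by
    rw [hk, Nat.mul_div_cancel' (Nat.even_mul_succ_self Nf).two_dvd]
  have hE : (Nf : ℝ) / 2 * (-L) + 1 / 2 * ((Nf : ℝ) ^ 2 * (-L)) = -((k : ℝ) * L) := by
    have : (2 : ℝ) * k = Nf * (Nf + 1) := by exact_mod_cast congrArg (Nat.cast : ℕ → ℝ) h2k
    linear_combination (L / 2) * this
  rw [hE, Real.exp_neg, Real.exp_nat_mul, Real.exp_log hpos, inv_eq_one_div]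
end

section
/- For integers n ≥ 0, Δ ≥ 1, and 0 ≤ k ≤ Δ, the sum ∑_{l=0}^{min(k, Δ-k)} C(2n+1+Δ, Δ-k-l) * C(2n+Δ+k-l, k-l) * (-1)^{k-l} equals (-1)^k * C(2n+1+Δ+k, Δ-k) * C(2n+2k, k). -/
open Finset Nat

/-- Binomial coefficient with integer lower index (zero when negative). -/
def chI (m : ℕ) (j : ℤ) : ℤ := if 0 ≤ j then ((m.choose j.toNat : ℕ) : ℤ) else 0

lemma chI_neg {m : ℕ} {j : ℤ} (h : j < 0) : chI m j = 0 := by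
  simp [chI, not_le.mpr h]

lemma chI_natCast (m a : ℕ) : chI m (a : ℤ) = (m.choose a : ℤ) := by
  simp [chI]

lemma key_q (b c k : ℕ) :
    (((b+c+k+3).choose (b+1) * (c+k+1).choose (k+1)
      + (b+c+k+2).choose b * (c+k+1).choose k : ℕ) : ℚ)
      = (((b+c+k+2).choose (k+1) * (b+c+2).choose (b+1) : ℕ) : ℚ) := by
  push_cast
  rw [Nat.cast_choose ℚ (show b+1 ≤ b+c+k+3 by omega),
      Nat.cast_choose ℚ (show k+1 ≤ c+k+1 by omega),
      Nat.cast_choose ℚ (show b ≤ b+c+k+2 by omega),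
      Nat.cast_choose ℚ (show k ≤ c+k+1 by omega),
      Nat.cast_choose ℚ (show k+1 ≤ b+c+k+2 by omega),
      Nat.cast_choose ℚ (show b+1 ≤ b+c+2 by omega)]
  rw [show b+c+k+3 - (b+1) = c+k+2 by omega, show c+k+1-(k+1) = c by omega,
      show b+c+k+2-b = c+k+2 by omega, show c+k+1-k = c+1 by omega,
      show b+c+k+2-(k+1) = b+c+1 by omega, show b+c+2-(b+1) = c+1 by omega]
  rw [show (b+c+k+3)! = (b+c+k+3)*(b+c+k+2)! by
        rw [show b+c+k+3 = (b+c+k+2)+1 by omega]; exact Nat.factorial_succ _,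
      show (c+k+2)! = (c+k+2)*(c+k+1)! by
        rw [show c+k+2 = (c+k+1)+1 by omega]; exact Nat.factorial_succ _,
      show (b+1)! = (b+1)*b ! from Nat.factorial_succ b,
      show (k+1)! = (k+1)*k ! from Nat.factorial_succ k,
      show (c+1)! = (c+1)*c ! from Nat.factorial_succ c,
      show (b+c+2)! = (b+c+2)*(b+c+1)! by
        rw [show b+c+2 = (b+c+1)+1 by omega]; exact Nat.factorial_succ _]
  have h1 : ((b ! : ℕ) : ℚ) ≠ 0 := Nat.cast_ne_zero.mpr (Nat.factorial_ne_zero _)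
  have h2 : ((k ! : ℕ) : ℚ) ≠ 0 := Nat.cast_ne_zero.mpr (Nat.factorial_ne_zero _)
  have h3 : ((c ! : ℕ) : ℚ) ≠ 0 := Nat.cast_ne_zero.mpr (Nat.factorial_ne_zero _)
  have h4 : (((b+c+k+2)! : ℕ) : ℚ) ≠ 0 := Nat.cast_ne_zero.mpr (Nat.factorial_ne_zero _)
  have h5 : (((c+k+1)! : ℕ) : ℚ) ≠ 0 := Nat.cast_ne_zero.mpr (Nat.factorial_ne_zero _)
  have h6 : (((b+c+1)! : ℕ) : ℚ) ≠ 0 := Nat.cast_ne_zero.mpr (Nat.factorial_ne_zero _)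
  push_cast
  field_simp
  ring

lemma key_s14 (b c k : ℕ) :
    (b+c+k+3).choose (b+1) * (c+k+1).choose (k+1)
      + (b+c+k+2).choose b * (c+k+1).choose k
      = (b+c+k+2).choose (k+1) * (b+c+2).choose (b+1) := by
  exact_mod_cast key_q b c k

lemma starNat (M k s : ℕ) (hs : 1 ≤ s) (hsM : s ≤ M) :
    (M+k+1).choose s * (M+k-s).choose (k+1) + (M+k).choose (s-1) * (M+k-s).choose k
      = (M+k).choose (k+1) * M.choose s := by
  obtain ⟨b, rfl⟩ : ∃ b, s = b+1 := ⟨s-1, by omega⟩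
  rcases Nat.lt_or_ge (b+1) M with h | h
  · obtain ⟨c, rfl⟩ : ∃ c, M = b+c+2 := ⟨M-b-2, by omega⟩
    rw [show b+c+2+k+1 = b+c+k+3 by omega, show b+c+2+k-(b+1) = c+k+1 by omega,
        show b+c+2+k = b+c+k+2 by omega, show b+1-1 = b by omega]
    exact key_s14 b c k
  · have hM : M = b+1 := by omega
    subst hM
    rw [show b+1+k-(b+1) = k by omega, show b+1-1 = b by omega,
        Nat.choose_succ_self, Nat.choose_self, Nat.choose_self]
    have hsym : (b+1+k).choose b = (b+1+k).choose (k+1) := by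
      rw [← Nat.choose_symm (show k+1 ≤ b+1+k by omega),
          show b+1+k-(k+1) = b by omega]
    rw [hsym]; ring

lemma star (M k : ℕ) (hM : 1 ≤ M) (j : ℤ) (hj : j + 1 ≤ (M:ℤ)) :
    chI (M+k+1) (j+(k:ℤ)+1) * ((((M:ℤ) - 1 - j).toNat.choose (k+1) : ℕ) : ℤ)
      + chI (M+k) (j+(k:ℤ)) * ((((M:ℤ) - 1 - j).toNat.choose k : ℕ) : ℤ)
      = (((M+k).choose (k+1) : ℕ) : ℤ) * chI M (j+(k:ℤ)+1) := by
  rcases lt_trichotomy (j+(k:ℤ)+1) 0 with h | h | h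
  · rw [chI_neg h, chI_neg (by omega : j+(k:ℤ) < 0), chI_neg h]; ring
  · -- j + k + 1 = 0
    rw [h, chI_neg (by omega : j+(k:ℤ) < 0),
        show ((M:ℤ) - 1 - j) = ((M+k : ℕ) : ℤ) by push_cast; omega,
        Int.toNat_natCast]
    simp [chI]
  · -- j + k + 1 ≥ 1
    set s : ℕ := (j+(k:ℤ)+1).toNat with hsdef
    have hs1 : 1 ≤ s := by omega
    have hjs : j = (s:ℤ) - (k:ℤ) - 1 := by omega
    have hsMk : s ≤ M + k := by omega
    rw [show j+(k:ℤ)+1 = ((s:ℕ):ℤ) by omega,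
        show j+(k:ℤ) = ((s-1:ℕ):ℤ) by omega,
        chI_natCast, chI_natCast, chI_natCast]
    rcases le_or_gt s M with hsM | hsM
    · rw [show ((M:ℤ) - 1 - j) = ((M+k-s : ℕ) : ℤ) by push_cast; omega,
          Int.toNat_natCast]
      exact_mod_cast starNat M k s hs1 hsM
    · have h1 : M.choose s = 0 := Nat.choose_eq_zero_of_lt hsM
      have h2 : ((M:ℤ) - 1 - j).toNat < k := by omega
      rw [h1, Nat.choose_eq_zero_of_lt h2, Nat.choose_eq_zero_of_lt (show ((M:ℤ)-1-j).toNat < k+1 by omega)]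
      simp

lemma auxSum (M : ℕ) (hM : 1 ≤ M) (j : ℤ) (hj : j + 1 ≤ (M:ℤ)) (k : ℕ) :
    ∑ t ∈ Finset.range (k+1),
        (-1:ℤ)^t * (((M-1+t).choose t : ℕ) : ℤ) * chI M (j+(t:ℤ))
      = (-1:ℤ)^k * chI (M+k) (j+(k:ℤ)) * ((((M:ℤ)-1-j).toNat.choose k : ℕ) : ℤ) := by
  induction k with
  | zero => simp
  | succ k ih =>
    rw [Finset.sum_range_succ, ih]
    have h := star M k hM j hj
    rw [show M+(k+1) = M+k+1 by omega, show M-1+(k+1) = M+k by omega, show j + ((k+1 : ℕ) : ℤ) = j + (k:ℤ) + 1 by push_cast; ring]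
    push_cast at h ⊢
    linear_combination ((-1:ℤ)^k) * h

/-- For integers `n ≥ 0`, `Δ ≥ 1` and `0 ≤ k ≤ Δ`,
`∑_{l=0}^{min(k, Δ-k)} C(2n+1+Δ, Δ-k-l) C(2n+Δ+k-l, k-l) (-1)^{k-l}
  = (-1)^k C(2n+1+Δ+k, Δ-k) C(2n+2k, k)`. -/
theorem coefficient_sum_formula (n Δ k : ℕ) (hΔ : 1 ≤ Δ) (hk : k ≤ Δ) :
    ∑ l ∈ Finset.range (min k (Δ - k) + 1),
        ((2 * n + 1 + Δ).choose (Δ - k - l) : ℤ) *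
          ((2 * n + Δ + k - l).choose (k - l)) * (-1 : ℤ) ^ (k - l) =
      (-1 : ℤ) ^ k * ((2 * n + 1 + Δ + k).choose (Δ - k)) *
        ((2 * n + 2 * k).choose k) := by
  set M : ℕ := 2*n+1+Δ with hM
  set j : ℤ := (Δ:ℤ) - 2*(k:ℤ) with hj
  have hM1 : 1 ≤ M := by omega
  have hjM : j + 1 ≤ (M:ℤ) := by simp only [hj, hM]; push_cast; omega
  have hkey := auxSum M hM1 j hjM k
  have hre : ∑ t ∈ Finset.range (k+1),
        (-1:ℤ)^t * (((M-1+t).choose t : ℕ) : ℤ) * chI M (j+(t:ℤ))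
      = ∑ l ∈ Finset.range (min k (Δ - k) + 1),
        ((2 * n + 1 + Δ).choose (Δ - k - l) : ℤ) *
          ((2 * n + Δ + k - l).choose (k - l)) * (-1 : ℤ) ^ (k - l) := by
    rw [← Finset.sum_range_reflect]
    rw [← Finset.sum_range_add_sum_Ico
          (fun l => (-1:ℤ)^(k+1-1-l) * (((M-1+(k+1-1-l)).choose (k+1-1-l) : ℕ) : ℤ)
            * chI M (j+((k+1-1-l : ℕ):ℤ)))
          (show min k (Δ - k) + 1 ≤ k+1 by omega)]
    have hzero : ∑ l ∈ Finset.Ico (min k (Δ - k) + 1) (k+1),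
        (-1:ℤ)^(k+1-1-l) * (((M-1+(k+1-1-l)).choose (k+1-1-l) : ℕ) : ℤ)
          * chI M (j+((k+1-1-l : ℕ):ℤ)) = 0 := by
      apply Finset.sum_eq_zero
      intro l hl
      rw [Finset.mem_Ico] at hl
      rw [chI_neg (by omega)]
      ring
    rw [hzero, add_zero]
    apply Finset.sum_congr rfl
    intro l hl
    rw [Finset.mem_range] at hl
    have hl1 : l ≤ k := by omega
    have hl2 : l ≤ Δ - k := by omega
    rw [show k+1-1-l = k-l by omega,
        show M-1+(k-l) = 2*n+Δ+k-l by omega,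
        show j+((k-l : ℕ):ℤ) = ((Δ-k-l : ℕ):ℤ) by push_cast [hj]; omega,
        chI_natCast]
    ring
  rw [← hre, hkey,
      show j+(k:ℤ) = ((Δ-k : ℕ):ℤ) by push_cast [hj]; omega,
      chI_natCast,
      show ((M:ℤ)-1-j) = ((2*n+2*k : ℕ):ℤ) by push_cast [hj, hM]; omega,
      Int.toNat_natCast]
end

section
/- For the Hamiltonian H(W, V, T) = W(W-1)(W-T)V² + [(a₁+2a₂)(W-1)W + a₃(T-1)W + a₄T(W-1)]V + a₂(a₁+a₂)(W-1), eliminating V from the Hamilton equations T(T-1)W' = ∂H/∂V and T(T-1)V' = -∂H/∂W yields the Painlevé VI equation for W with parameters μ₁ = a₁²/2, μ₂ = -a₄²/2, μ₃ = a₃²/2, μ₄ = (1-a₀²)/2 where a₀ = 1 - a₁ - 2a₂ - a₃ - a₄. -/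
private lemma painleve_key (T d w2 v v1 P Q C D E U B : ℝ)
    (e1 : T * (T - 1) * d = U * v + B)
    (e2 : T * (T - 1) * v1 = -(C * v ^ 2 + D * v + E))
    (E3 : (1 * (T - 1) + T * 1) * d + T * (T - 1) * w2 = P * v + U * v1 + Q) :
    U * (T * (T - 1)) * ((1 * (T - 1) + T * 1) * d + T * (T - 1) * w2) =
      T * (T - 1) * P * (T * (T - 1) * d - B) -
        (C * (T * (T - 1) * d - B) ^ 2 + D * U * (T * (T - 1) * d - B) + E * U ^ 2) +
        U * (T * (T - 1)) * Q := by
  linear_combination (U * (T * (T - 1))) * E3 +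
    (-(T * (T - 1)) * P + 2 * C * (T * (T - 1) * d - B) + D * U -
      C * (T * (T - 1) * d - U * v - B)) * e1 + U ^ 2 * e2

set_option maxHeartbeats 1600000 in
/-- Eliminating `V` from the Hamiltonian system for
`H = W(W-1)(W-T)V² + [(a₁+2a₂)(W-1)W + a₃(T-1)W + a₄T(W-1)]V + a₂(a₁+a₂)(W-1)`,
namely `T(T-1)W' = ∂H/∂V` and `T(T-1)V' = -∂H/∂W`, yields the Painlevé VI
equation for `W` with parameters `μ₁ = a₁²/2`, `μ₂ = -a₄²/2`, `μ₃ = a₃²/2`,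
`μ₄ = (1-a₀²)/2` where `a₀ = 1 - a₁ - 2a₂ - a₃ - a₄`. -/
theorem hamiltonian_system_gives_painleveVI
    (a₁ a₂ a₃ a₄ : ℝ) (S : Set ℝ) (hS : IsOpen S)
    (W V : ℝ → ℝ)
    (hW : ∀ T ∈ S, DifferentiableAt ℝ W T)
    (hW' : ∀ T ∈ S, DifferentiableAt ℝ (deriv W) T)
    (hV : ∀ T ∈ S, DifferentiableAt ℝ V T)
    (hdom : ∀ T ∈ S, T ≠ 0 ∧ T ≠ 1 ∧ W T ≠ 0 ∧ W T ≠ 1 ∧ W T ≠ T)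
    (ham1 : ∀ T ∈ S,
      T * (T - 1) * deriv W T =
        2 * W T * (W T - 1) * (W T - T) * V T +
          ((a₁ + 2 * a₂) * (W T - 1) * W T + a₃ * (T - 1) * W T +
            a₄ * T * (W T - 1)))
    (ham2 : ∀ T ∈ S,
      T * (T - 1) * deriv V T =
        -(((W T - 1) * (W T - T) + W T * (W T - T) + W T * (W T - 1)) * V T ^ 2 +
            ((a₁ + 2 * a₂) * (2 * W T - 1) + a₃ * (T - 1) + a₄ * T) * V T +
            a₂ * (a₁ + a₂))) :
    ∀ T ∈ S,
      deriv (deriv W) T =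
        (1 / 2) * (1 / W T + 1 / (W T - 1) + 1 / (W T - T)) * (deriv W T) ^ 2 -
          (1 / T + 1 / (T - 1) + 1 / (W T - T)) * deriv W T +
          (W T * (W T - 1) * (W T - T) / (T ^ 2 * (T - 1) ^ 2)) *
            (a₁ ^ 2 / 2 + (-(a₄ ^ 2) / 2) * T / (W T) ^ 2 +
              (a₃ ^ 2 / 2) * (T - 1) / (W T - 1) ^ 2 +
              ((1 - (1 - a₁ - 2 * a₂ - a₃ - a₄) ^ 2) / 2) * T * (T - 1) /
                (W T - T) ^ 2) := by

  intro T hT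
  obtain ⟨hT0, hT1, hw0, hw1, hwT⟩ := hdom T hT
  have hT1' : T - 1 ≠ 0 := sub_ne_zero.mpr hT1
  have hw1' : W T - 1 ≠ 0 := sub_ne_zero.mpr hw1
  have hwT' : W T - T ≠ 0 := sub_ne_zero.mpr hwT
  have hTT : T * (T - 1) ≠ 0 := mul_ne_zero hT0 hT1'
  have h2w : 2 * W T * (W T - 1) * (W T - T) ≠ 0 :=
    mul_ne_zero (mul_ne_zero (mul_ne_zero two_ne_zero hw0) hw1') hwT'
  have e1 := ham1 T hT
  have e2 := ham2 T hT
  -- derivatives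
  have hWd : HasDerivAt W (deriv W T) T := (hW T hT).hasDerivAt
  have hW'd : HasDerivAt (deriv W) (deriv (deriv W) T) T := (hW' T hT).hasDerivAt
  have hVd : HasDerivAt V (deriv V T) T := (hV T hT).hasDerivAt
  have hid : HasDerivAt (fun t : ℝ => t) 1 T := hasDerivAt_id T
  have hW1 : HasDerivAt (fun t => W t - 1) (deriv W T) T := hWd.sub_const 1
  have hWt : HasDerivAt (fun t => W t - t) (deriv W T - 1) T := hWd.sub hid
  have hL : HasDerivAt (fun t : ℝ => t * (t - 1) * deriv W t)
      ((1 * (T - 1) + T * 1) * deriv W T + T * (T - 1) * deriv (deriv W) T) T :=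
    (hid.mul (hid.sub_const 1)).mul hW'd
  have hA : HasDerivAt (fun t => 2 * W t * (W t - 1) * (W t - t) * V t)
      (((2 * deriv W T * (W T - 1) + 2 * W T * deriv W T) * (W T - T)
          + 2 * W T * (W T - 1) * (deriv W T - 1)) * V T
        + 2 * W T * (W T - 1) * (W T - T) * deriv V T) T :=
    (((hWd.const_mul 2).mul hW1).mul hWt).mul hVd
  have hB : HasDerivAt (fun t => (a₁ + 2 * a₂) * (W t - 1) * W t)
      ((a₁ + 2 * a₂) * deriv W T * W T + (a₁ + 2 * a₂) * (W T - 1) * deriv W T) T :=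
    (hW1.const_mul (a₁ + 2 * a₂)).mul hWd
  have hC : HasDerivAt (fun t => a₃ * (t - 1) * W t)
      (a₃ * 1 * W T + a₃ * (T - 1) * deriv W T) T :=
    ((hid.sub_const 1).const_mul a₃).mul hWd
  have hD : HasDerivAt (fun t => a₄ * t * (W t - 1))
      (a₄ * 1 * (W T - 1) + a₄ * T * deriv W T) T :=
    (hid.const_mul a₄).mul hW1
  have hR : HasDerivAt (fun t => 2 * W t * (W t - 1) * (W t - t) * V t +
      ((a₁ + 2 * a₂) * (W t - 1) * W t + a₃ * (t - 1) * W t + a₄ * t * (W t - 1)))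
      ((((2 * deriv W T * (W T - 1) + 2 * W T * deriv W T) * (W T - T)
          + 2 * W T * (W T - 1) * (deriv W T - 1)) * V T
        + 2 * W T * (W T - 1) * (W T - T) * deriv V T)
       + (((a₁ + 2 * a₂) * deriv W T * W T + (a₁ + 2 * a₂) * (W T - 1) * deriv W T)
          + (a₃ * 1 * W T + a₃ * (T - 1) * deriv W T)
          + (a₄ * 1 * (W T - 1) + a₄ * T * deriv W T))) T :=
    hA.add ((hB.add hC).add hD)
  have heq : (fun t : ℝ => t * (t - 1) * deriv W t) =ᶠ[nhds T]
      (fun t => 2 * W t * (W t - 1) * (W t - t) * V t +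
        ((a₁ + 2 * a₂) * (W t - 1) * W t + a₃ * (t - 1) * W t + a₄ * t * (W t - 1))) :=
    Filter.eventuallyEq_of_mem (hS.mem_nhds hT) ham1
  have E3 : (1 * (T - 1) + T * 1) * deriv W T + T * (T - 1) * deriv (deriv W) T =
      (((2 * deriv W T * (W T - 1) + 2 * W T * deriv W T) * (W T - T)
          + 2 * W T * (W T - 1) * (deriv W T - 1)) * V T
        + 2 * W T * (W T - 1) * (W T - T) * deriv V T)
       + (((a₁ + 2 * a₂) * deriv W T * W T + (a₁ + 2 * a₂) * (W T - 1) * deriv W T)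
          + (a₃ * 1 * W T + a₃ * (T - 1) * deriv W T)
          + (a₄ * 1 * (W T - 1) + a₄ * T * deriv W T)) := by
    rw [← hL.deriv, ← hR.deriv]
    exact heq.deriv_eq
  have key := painleve_key T (deriv W T) (deriv (deriv W) T) (V T) (deriv V T)
    ((2 * deriv W T * (W T - 1) + 2 * W T * deriv W T) * (W T - T) + 2 * W T * (W T - 1) * (deriv W T - 1)) ((a₁ + 2 * a₂) * deriv W T * W T + (a₁ + 2 * a₂) * (W T - 1) * deriv W T + (a₃ * 1 * W T + a₃ * (T - 1) * deriv W T) + (a₄ * 1 * (W T - 1) + a₄ * T * deriv W T)) ((W T - 1) * (W T - T) + W T * (W T - T) + W T * (W T - 1)) ((a₁ + 2 * a₂) * (2 * W T - 1) + a₃ * (T - 1) + a₄ * T) (a₂ * (a₁ + a₂)) (2 * W T * (W T - 1) * (W T - T)) ((a₁ + 2 * a₂) * (W T - 1) * W T + a₃ * (T - 1) * W T + a₄ * T * (W T - 1)) e1 e2 E3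
  have hden : (2 * W T * (W T - 1) * (W T - T)) * (T * (T - 1)) * (T * (T - 1)) ≠ 0 :=
    mul_ne_zero (mul_ne_zero h2w hTT) hTT
  have hw2 : deriv (deriv W) T =
      (T * (T - 1) * ((2 * deriv W T * (W T - 1) + 2 * W T * deriv W T) * (W T - T) + 2 * W T * (W T - 1) * (deriv W T - 1)) * (T * (T - 1) * deriv W T - ((a₁ + 2 * a₂) * (W T - 1) * W T + a₃ * (T - 1) * W T + a₄ * T * (W T - 1))) -
        (((W T - 1) * (W T - T) + W T * (W T - T) + W T * (W T - 1)) * (T * (T - 1) * deriv W T - ((a₁ + 2 * a₂) * (W T - 1) * W T + a₃ * (T - 1) * W T + a₄ * T * (W T - 1))) ^ 2 + ((a₁ + 2 * a₂) * (2 * W T - 1) + a₃ * (T - 1) + a₄ * T) * (2 * W T * (W T - 1) * (W T - T)) * (T * (T - 1) * deriv W T - ((a₁ + 2 * a₂) * (W T - 1) * W T + a₃ * (T - 1) * W T + a₄ * T * (W T - 1))) + (a₂ * (a₁ + a₂)) * (2 * W T * (W T - 1) * (W T - T)) ^ 2) +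
        (2 * W T * (W T - 1) * (W T - T)) * (T * (T - 1)) * ((a₁ + 2 * a₂) * deriv W T * W T + (a₁ + 2 * a₂) * (W T - 1) * deriv W T + (a₃ * 1 * W T + a₃ * (T - 1) * deriv W T) + (a₄ * 1 * (W T - 1) + a₄ * T * deriv W T)) -
        (2 * W T * (W T - 1) * (W T - T)) * (T * (T - 1)) * ((1 * (T - 1) + T * 1) * deriv W T)) /
      ((2 * W T * (W T - 1) * (W T - T)) * (T * (T - 1)) * (T * (T - 1))) := by
    rw [eq_div_iff hden]
    linear_combination key
  rw [hw2]
  field_simp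
  ring
end
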